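/- arXiv:1603.02542 — 5 statements merged into one kernel-verified Lean document; each statement's English description precedes it below -/
import Mathlib

section
/- Let f : [0,1] → [0,1] be a piecewise continuous interval map with no connections and no periodic points. Then for every x ∈ [0,1] and every integer r ≥ 1, there exists an open subinterval J of [0,1] containing x (relatively open in [0,1]) such that for every y ∈ J, none of f(y), f²(y), …, f^r(y) lies in J. -/
open Set Filter MeasureTheory Topology
open scoped ENNReal

/-- Data witnessing that `f` is a piecewise continuous interval map on `[0,1]`:
a partition `0 = pt 0 < pt 1 < ⋯ < pt (d+1) = 1` such that `f` is continuous on each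
open subinterval and has one-sided limits `wR i` (right limit at the left endpoint)
and `wL i` (left limit at the right endpoint) on each subinterval. -/
structure PiecewiseContData (f : ℝ → ℝ) where
  d : ℕ
  pt : Fin (d + 2) → ℝ
  mono : StrictMono pt
  first : pt 0 = 0
  last : pt (Fin.last (d + 1)) = 1
  cont : ∀ i : Fin (d + 1), ContinuousOn f (Ioo (pt i.castSucc) (pt i.succ))
  wR : Fin (d + 1) → ℝ
  wL : Fin (d + 1) → ℝ
  wR_lim : ∀ i : Fin (d + 1),
    Tendsto f (𝓝[Ioo (pt i.castSucc) (pt i.succ)] (pt i.castSucc)) (𝓝 (wR i))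
  wL_lim : ∀ i : Fin (d + 1),
    Tendsto f (𝓝[Ioo (pt i.castSucc) (pt i.succ)] (pt i.succ)) (𝓝 (wL i))

/-- The set `D` of partition points. -/
def PiecewiseContData.D {f : ℝ → ℝ} (P : PiecewiseContData f) : Set ℝ :=
  Set.range P.pt

/-- The set `W` of one-sided limit values of `f` at the partition points. -/
def PiecewiseContData.W {f : ℝ → ℝ} (P : PiecewiseContData f) : Set ℝ :=
  Set.range P.wR ∪ Set.range P.wL

/-- The no-connections condition: no forward iterate (`k ≥ 1`) of a partition point lies
in `D`, and no forward iterate (`k ≥ 0`) of a one-sided limit value lies in `D`. -/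
def PiecewiseContData.NoConnections {f : ℝ → ℝ} (P : PiecewiseContData f) : Prop :=
  (∀ i : Fin (P.d + 2), ∀ k : ℕ, 1 ≤ k → f^[k] (P.pt i) ∉ P.D) ∧
  (∀ w ∈ P.W, ∀ k : ℕ, f^[k] w ∉ P.D)

/-- `f` has no periodic points in `[0,1]`. -/
def NoPeriodicPts (f : ℝ → ℝ) : Prop :=
  ∀ x ∈ Icc (0:ℝ) 1, ∀ k : ℕ, 1 ≤ k → f^[k] x ≠ x

/-- The Birkhoff average `μ_n = (1/n) ∑_{k<n} δ_{f^k(p)}` of Dirac measures along the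
orbit of `p`. -/
noncomputable def birkhoffMeasure (f : ℝ → ℝ) (p : ℝ) (n : ℕ) : Measure ℝ :=
  (n : ℝ≥0∞)⁻¹ • ∑ k ∈ Finset.range n, Measure.dirac (f^[k] p)

/-! Every cluster value of `f` at `c ∈ [0,1]`, approached within `[0,1]`, is `f c` or, when `c`
is a partition point, a one-sided limit `w ∈ W`. By compactness of `[0,1]` every cluster value
of `f^[k]` at `x` is then the end of a chain `x = c₀, c₁, …, c_k` of such steps: it is `f^[k] x`,
or an iterate `f^[n] w` with `w ∈ W` and then the orbit of `x` meets `D`, say `f^[m] x ∈ D`.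
Neither can equal `x`: the first makes `x` periodic, and the second gives the connection
`f^[m + n] w = f^[m] x ∈ D`. So for each of the finitely many `k ≤ r`, `f^[k]` maps points near
`x` away from a fixed neighbourhood of `x`. -/

theorem MapClusterPt.eq_of_tendsto {α X : Type*} [TopologicalSpace X] [T2Space X]
    {F : Filter α} {u : α → X} {z w : X} (hz : MapClusterPt z F u) (hu : Tendsto u F (𝓝 w)) :
    z = w := by
  by_contra h
  exact hz.ne ((disjoint_nhds_nhds.2 h).mono_right hu).eq_bot

theorem clusterPt_iSup {ι X : Type*} [Finite ι] [TopologicalSpace X] {x : X}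
    {F : ι → Filter X} : ClusterPt x (⨆ i, F i) ↔ ∃ i, ClusterPt x (F i) := by
  cases nonempty_fintype ι
  simp [← Finset.sup_univ_eq_iSup, clusterPt_iff_not_disjoint, Finset.disjoint_sup_right]

theorem IsCompact.exists_mapClusterPt_nhdsWithin {X Y : Type*} [TopologicalSpace X]
    [TopologicalSpace Y] {K : Set X} (hK : IsCompact K) {G : Filter X} (hG : G ≤ 𝓟 K)
    {f : X → Y} {z : Y} (hz : MapClusterPt z G f) :
    ∃ c ∈ K, ClusterPt c G ∧ MapClusterPt z (𝓝[K] c) f := by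
  have : NeBot (comap f (𝓝 z) ⊓ G) := neBot_inf_comap_iff_map'.2 hz
  obtain ⟨c, hcK, hc⟩ := hK (f := comap f (𝓝 z) ⊓ G) (inf_le_right.trans hG)
  refine ⟨c, hcK, hc.mono inf_le_right, neBot_inf_comap_iff_map'.1 (hc.neBot.mono ?_)⟩
  exact le_inf (inf_le_right.trans inf_le_left)
    (le_inf inf_le_left (inf_le_right.trans (inf_le_right.trans hG)))

theorem Fin.exists_castSucc_le_lt_succ {α : Type*} [LinearOrder α] {n : ℕ}
    (g : Fin (n + 1) → α) {c : α} (h0 : g 0 ≤ c) (hc : c < g (Fin.last n)) :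
    ∃ i : Fin n, g i.castSucc ≤ c ∧ c < g i.succ := by
  by_contra! h
  exact (Fin.induction (motive := fun j => g j ≤ c) h0 h (Fin.last n)).not_gt hc

theorem exists_nhds_forall_notMem_of_not_mapClusterPt {X ι : Type*} [TopologicalSpace X]
    {s : Set X} {x : X} {g : ι → X → X} {t : Finset ι}
    (h : ∀ i ∈ t, ¬ MapClusterPt x (𝓝[s] x) (g i)) :
    ∃ U ∈ 𝓝 x, ∀ y ∈ U ∩ s, ∀ i ∈ t, g i y ∉ U := by
  simp only [mapClusterPt_iff_frequently, not_forall, not_frequently, exists_prop] at h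
  choose! V hV hgV using h
  obtain ⟨W, hW, hxW, hWs⟩ := mem_nhdsWithin.1 ((eventually_all_finset t).2 hgV)
  refine ⟨W ∩ ⋂ i ∈ t, V i, inter_mem (hW.mem_nhds hxW) ((Finset.iInter_mem_sets t).2 hV),
    fun y ⟨⟨hyW, _⟩, hys⟩ i hi hgy => hWs ⟨hyW, hys⟩ i hi ?_⟩
  exact (mem_iInter₂.1 hgy.2) i hi

namespace PiecewiseContData

variable {f : ℝ → ℝ} (P : PiecewiseContData f)

def piece (i : Fin (P.d + 1)) : Set ℝ := Ioo (P.pt i.castSucc) (P.pt i.succ)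

theorem Icc_subset_D_union_iUnion_piece : Icc (0:ℝ) 1 ⊆ P.D ∪ ⋃ i, P.piece i := by
  intro c hc
  by_cases hcD : c ∈ P.D
  · exact Or.inl hcD
  have hc1 : c < P.pt (Fin.last _) :=
    P.last ▸ hc.2.lt_of_ne fun h => hcD ⟨Fin.last _, P.last.trans h.symm⟩
  obtain ⟨i, hi, hci⟩ := Fin.exists_castSucc_le_lt_succ P.pt (P.first ▸ hc.1) hc1
  exact Or.inr (mem_iUnion.2 ⟨i, hi.lt_of_ne fun h => hcD ⟨_, h⟩, hci⟩)

theorem nhdsWithin_Icc_le_pure_sup_iSup (c : ℝ) :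
    𝓝[Icc (0:ℝ) 1] c ≤ pure c ⊔ ⨆ i, 𝓝[P.piece i] c := by
  have hD : 𝓝[P.D \ {c}] c = ⊥ := by
    rw [← notMem_closure_iff_nhdsWithin_eq_bot, D,
      ((Set.finite_range P.pt).subset sdiff_subset).isClosed.closure_eq]
    exact fun h => h.2 rfl
  calc 𝓝[Icc (0:ℝ) 1] c ≤ 𝓝[insert c ((P.D \ {c}) ∪ ⋃ i, P.piece i)] c := by
        refine nhdsWithin_mono _ fun y hy => ?_
        rcases P.Icc_subset_D_union_iUnion_piece hy with h | h
        · by_cases hyc : y = c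
          · exact Or.inl hyc
          · exact Or.inr (Or.inl ⟨h, hyc⟩)
        · exact Or.inr (Or.inr h)
    _ = _ := by rw [nhdsWithin_insert, nhdsWithin_union, hD, bot_sup_eq, nhdsWithin_iUnion]

theorem mapClusterPt_nhdsWithin_piece {i : Fin (P.d + 1)} {c z : ℝ}
    (hz : MapClusterPt z (𝓝[P.piece i] c) f) : z = f c ∨ (c ∈ P.D ∧ z ∈ P.W) := by
  obtain rfl | hca := eq_or_ne c (P.pt i.castSucc)
  · exact Or.inr ⟨⟨_, rfl⟩, Or.inl ⟨i, (hz.eq_of_tendsto (P.wR_lim i)).symm⟩⟩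
  obtain rfl | hcb := eq_or_ne c (P.pt i.succ)
  · exact Or.inr ⟨⟨_, rfl⟩, Or.inr ⟨i, (hz.eq_of_tendsto (P.wL_lim i)).symm⟩⟩
  by_cases hc : c ∈ Icc (P.pt i.castSucc) (P.pt i.succ)
  · have hc' : c ∈ P.piece i := ⟨hc.1.lt_of_ne' hca, hc.2.lt_of_ne hcb⟩
    have hfc := (P.cont i).continuousAt (isOpen_Ioo.mem_nhds hc')
    exact Or.inl (hz.eq_of_tendsto (hfc.tendsto.mono_left nhdsWithin_le_nhds))
  · rw [← closure_Ioo (P.mono (Fin.castSucc_lt_succ (i := i))).ne,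
      notMem_closure_iff_nhdsWithin_eq_bot] at hc
    simp only [MapClusterPt, piece, hc, map_bot] at hz
    exact (hz.ne (inf_bot_eq _)).elim

theorem mapClusterPt_nhdsWithin_Icc {c z : ℝ} (hz : MapClusterPt z (𝓝[Icc (0:ℝ) 1] c) f) :
    z = f c ∨ (c ∈ P.D ∧ z ∈ P.W) := by
  have := hz.mono (P.nhdsWithin_Icc_le_pure_sup_iSup c)
  rw [MapClusterPt, map_sup, map_iSup, clusterPt_sup, clusterPt_iSup] at this
  rcases this with h | ⟨i, h⟩
  · rw [map_pure] at h
    exact Or.inl (h.mapClusterPt_id.eq_of_tendsto (tendsto_pure_nhds id _))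
  · exact P.mapClusterPt_nhdsWithin_piece h

theorem mapClusterPt_iterate (hf : MapsTo f (Icc (0:ℝ) 1) (Icc (0:ℝ) 1)) (x : ℝ) (k : ℕ)
    {z : ℝ} (hz : MapClusterPt z (𝓝[Icc (0:ℝ) 1] x) f^[k]) :
    z = f^[k] x ∨ ((∃ m, f^[m] x ∈ P.D) ∧ ∃ w ∈ P.W, ∃ n, z = f^[n] w) := by
  induction k generalizing z with
  | zero => exact Or.inl (hz.eq_of_tendsto (tendsto_id.mono_left nhdsWithin_le_nhds))
  | succ k ih =>
    rw [Function.iterate_succ', MapClusterPt, ← map_map] at hz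
    obtain ⟨c, -, hc, hzc⟩ := isCompact_Icc.exists_mapClusterPt_nhdsWithin
      ((hf.iterate k).tendsto.mono_left inf_le_right) hz
    rcases ih hc with rfl | ⟨hxD, w, hw, n, rfl⟩ <;>
      rcases P.mapClusterPt_nhdsWithin_Icc hzc with rfl | ⟨hcD, hzW⟩
    · exact Or.inl (Function.iterate_succ_apply' f k x).symm
    · exact Or.inr ⟨⟨k, hcD⟩, z, hzW, 0, rfl⟩
    · exact Or.inr ⟨hxD, w, hw, n + 1, (Function.iterate_succ_apply' f n w).symm⟩
    · exact Or.inr ⟨hxD, z, hzW, 0, rfl⟩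

theorem not_mapClusterPt_self_iterate (hf : MapsTo f (Icc (0:ℝ) 1) (Icc (0:ℝ) 1))
    (hnc : P.NoConnections) (hnp : NoPeriodicPts f) {x : ℝ} (hx : x ∈ Icc (0:ℝ) 1) {k : ℕ}
    (hk : 1 ≤ k) : ¬ MapClusterPt x (𝓝[Icc (0:ℝ) 1] x) f^[k] := by
  intro h
  rcases P.mapClusterPt_iterate hf x k h with h | ⟨⟨m, hm⟩, w, hw, n, hn⟩
  · exact hnp x hx k hk h.symm
  · exact hnc.2 w hw (m + n) (by rwa [Function.iterate_add_apply, ← hn])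

end PiecewiseContData

theorem stmt0_general (f : ℝ → ℝ) (hf : MapsTo f (Icc (0:ℝ) 1) (Icc (0:ℝ) 1))
    (P : PiecewiseContData f) (hnc : P.NoConnections) (hnp : NoPeriodicPts f)
    (x : ℝ) (hx : x ∈ Icc (0:ℝ) 1) (r : ℕ) :
    ∃ a b : ℝ, a < x ∧ x < b ∧
      ∀ y ∈ Ioo a b ∩ Icc (0:ℝ) 1, ∀ k : ℕ, 1 ≤ k → k ≤ r →
        f^[k] y ∉ Ioo a b ∩ Icc (0:ℝ) 1 := by
  obtain ⟨U, hU, hUf⟩ := exists_nhds_forall_notMem_of_not_mapClusterPt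
    (t := Finset.Icc 1 r) (g := fun k => f^[k])
    fun k hk => P.not_mapClusterPt_self_iterate hf hnc hnp hx (Finset.mem_Icc.1 hk).1
  obtain ⟨ε, hε, hball⟩ := Metric.mem_nhds_iff.1 hU
  refine ⟨x - ε, x + ε, by linarith, by linarith, fun y hy k hk1 hkr hfy => ?_⟩
  rw [← Real.ball_eq_Ioo] at hy hfy
  exact hUf y ⟨hball hy.1, hy.2⟩ k (Finset.mem_Icc.2 ⟨hk1, hkr⟩) (hball hfy.1)

/-- for a piecewise continuous interval map with no connections and no
periodic points, every `x ∈ [0,1]` has a relatively open subinterval neighborhood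
`J = (a,b) ∩ [0,1]` such that no orbit point `f(y), …, f^r(y)` of a point `y ∈ J`
returns to `J`. -/
theorem stmt0 (f : ℝ → ℝ) (hf : MapsTo f (Icc (0:ℝ) 1) (Icc (0:ℝ) 1))
    (P : PiecewiseContData f) (hnc : P.NoConnections) (hnp : NoPeriodicPts f)
    (x : ℝ) (hx : x ∈ Icc (0:ℝ) 1) (r : ℕ) (hr : 1 ≤ r) :
    ∃ a b : ℝ, a < x ∧ x < b ∧
      ∀ y ∈ Ioo a b ∩ Icc (0:ℝ) 1, ∀ k : ℕ, 1 ≤ k → k ≤ r →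
        f^[k] y ∉ Ioo a b ∩ Icc (0:ℝ) 1 :=
  stmt0_general f hf P hnc hnp x hx r
end

section
/- Let f : [0,1] → [0,1] be a piecewise continuous interval map with no connections and no periodic points, let p ∈ [0,1] be a point whose full forward orbit {p, f(p), f²(p), …} avoids the set D of partition points, and let μ_n = (1/n) Σ_{k=0}^{n-1} δ_{f^k(p)} be the Birkhoff averages of Dirac measures. Suppose a subsequence (μ_{n_j}) converges to a Borel probability measure μ in the weak* topology. Then for every x ∈ [0,1] and every ε > 0, there exist an open subinterval J of [0,1] containing x and an integer j₀ such that μ_{n_j}(J) < ε for all j ≥ j₀. -/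
open Set Filter MeasureTheory Topology
open scoped ENNReal

/-!
Suppose, to the contrary, that the orbit of `p` frequently spends a fraction `≥ ε` of the
times `n j` in every neighbourhood of `x`. Such a heavy point stays heavy under `f` wherever `f`
is continuous. At a partition point that the orbit of `p` never hits, half of the weight lies on
one side, and `f` carries that side to a one-sided limit value. Following the orbit of `x` up to
its first visit to `D` (if any) therefore yields a heavy point `w` whose whole orbit avoids `D`,
by the absence of connections. Then `f^[s]` is continuous at `w` for every `s`, and the points
`f^[s] w` are distinct as there are no periodic points; one neighbourhood of `w` maps into
disjoint neighbourhoods of `w, f w, …, f^[m-1] w`, each of which therefore receives almost all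
of its visits, so the frequency is at most `1 / m` for every `m`.
-/

section Visits

variable {α : Type*}

open Classical in
noncomputable def visitCount (f : α → α) (p : α) (N : ℕ) (s : Set α) : ℕ :=
  ((Finset.range N).filter (fun k => f^[k] p ∈ s)).card

variable {f : α → α} {p : α}

lemma visitCount_le_of_forall_imp {s t : Set α} (h : ∀ k, f^[k] p ∈ s → f^[k] p ∈ t)
    (N : ℕ) :
    visitCount f p N s ≤ visitCount f p N t := by
  classical
  exact Finset.card_le_card (Finset.monotone_filter_right _ fun k _ => h k)

@[simp]
lemma visitCount_empty (N : ℕ) : visitCount f p N ∅ = 0 := by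
  simp [visitCount]

lemma visitCount_union_le (N : ℕ) (s t : Set α) :
    visitCount f p N (s ∪ t) ≤ visitCount f p N s + visitCount f p N t := by
  classical
  simp only [visitCount, Set.mem_union, Finset.filter_or]
  convert Finset.card_union_le _ _

/-- Shifting the times by `m` loses at most the `m` times pushed past `N`. -/
lemma visitCount_le_add_of_mapsTo {m : ℕ} {s t : Set α} (h : MapsTo f^[m] s t) (N : ℕ) :
    visitCount f p N s ≤ visitCount f p N t + m := by
  classical
  calc visitCount f p N s
      = (((Finset.range N).filter (fun k => f^[k] p ∈ s)).map (addLeftEmbedding m)).card :=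
        (Finset.card_map _).symm
    _ ≤ (((Finset.range N).filter (fun k => f^[k] p ∈ t)) ∪ Finset.Ico N (N + m)).card := by
        refine Finset.card_le_card fun k hk => ?_
        simp only [Finset.mem_map, Finset.mem_filter, Finset.mem_range, addLeftEmbedding_apply]
          at hk
        obtain ⟨k, ⟨hkN, hks⟩, rfl⟩ := hk
        have hmem : f^[m + k] p ∈ t := by rw [Function.iterate_add_apply]; exact h hks
        by_cases hlt : m + k < N
        · simp [hlt, hmem]
        · simp only [Finset.mem_union, Finset.mem_Ico]; omega
    _ ≤ visitCount f p N t + m := (Finset.card_union_le _ _).trans (by simp [visitCount])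

lemma sum_visitCount_le {ι : Type*} (I : Finset ι) {U : ι → Set α}
    (hU : (I : Set ι).PairwiseDisjoint U) (N : ℕ) :
    ∑ i ∈ I, visitCount f p N (U i) ≤ N := by
  classical
  calc ∑ i ∈ I, visitCount f p N (U i)
      = (I.biUnion fun i => (Finset.range N).filter (fun k => f^[k] p ∈ U i)).card := by
        rw [Finset.card_biUnion]
        · rfl
        intro i hi j hj hij
        refine Finset.disjoint_filter.2 fun k _ hki hkj => ?_
        exact Set.disjoint_left.1 (hU hi hj hij) hki hkj
    _ ≤ (Finset.range N).card := Finset.card_le_card (Finset.biUnion_subset.2 fun _ _ =>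
        Finset.filter_subset _ _)
    _ = N := Finset.card_range N

end Visits

section Heavy

variable {α : Type*} {f : α → α} {p : α} {n : ℕ → ℕ} {c : ℝ} {l l₁ l₂ : Filter α}

/-- A form of `limsup_j μ_{n j} U ≥ c` for all `U ∈ l` (`μ_N = birkhoffMeasure f p N`) with an
additive slack `K`, which absorbs the bounded losses of `visitCount_le_add_of_mapsTo`. -/
def Heavy (f : α → α) (p : α) (n : ℕ → ℕ) (c : ℝ) (l : Filter α) : Prop :=
  ∀ U ∈ l, ∃ K : ℝ, ∃ᶠ j in atTop, c * n j - K ≤ visitCount f p (n j) U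

lemma Heavy.map_iterate {l' : Filter α} (h : Heavy f p n c l) {m : ℕ}
    (hl : Tendsto f^[m] l l') : Heavy f p n c l' := by
  intro U hU
  obtain ⟨K, hK⟩ := h _ (hl hU)
  refine ⟨K + m, hK.mono fun j hj => ?_⟩
  have hshift : (visitCount f p (n j) (f^[m] ⁻¹' U) : ℝ) ≤ visitCount f p (n j) U + m := by
    exact_mod_cast visitCount_le_add_of_mapsTo (s := f^[m] ⁻¹' U) (fun _ hz => hz) _
  linarith

lemma Heavy.map {l' : Filter α} (h : Heavy f p n c l) (hl : Tendsto f l l') :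
    Heavy f p n c l' :=
  h.map_iterate (m := 1) hl

lemma Heavy.inf_principal {S : Set α} (h : Heavy f p n c l) (hS : ∀ k, f^[k] p ∈ S) :
    Heavy f p n c (l ⊓ 𝓟 S) := by
  intro U hU
  obtain ⟨K, hK⟩ := h _ (mem_inf_principal.1 hU)
  refine ⟨K, hK.mono fun j hj => hj.trans ?_⟩
  exact_mod_cast
    visitCount_le_of_forall_imp (s := {z | z ∈ S → z ∈ U}) (fun k hk => hk (hS k)) _

lemma Heavy.half_of_sup (h : Heavy f p n c (l₁ ⊔ l₂)) :
    Heavy f p n (c / 2) l₁ ∨ Heavy f p n (c / 2) l₂ := by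
  refine or_iff_not_imp_left.2 fun h₁ U₂ hU₂ => ?_
  simp only [Heavy, not_forall, not_exists, not_frequently, not_le] at h₁
  obtain ⟨U₁, hU₁, hsmall⟩ := h₁
  obtain ⟨K, hK⟩ := h (U₁ ∪ U₂) ⟨mem_of_superset hU₁ subset_union_left,
    mem_of_superset hU₂ subset_union_right⟩
  refine ⟨K, (hK.and_eventually (hsmall 0)).mono fun j ⟨hj, hj₁⟩ => ?_⟩
  have hunion : (visitCount f p (n j) (U₁ ∪ U₂) : ℝ) ≤
      visitCount f p (n j) U₁ + visitCount f p (n j) U₂ := by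
    exact_mod_cast visitCount_union_le _ _ _
  linarith

lemma Heavy.not_bot (hn : Tendsto n atTop atTop) (hc : 0 < c) : ¬ Heavy f p n c ⊥ := by
  intro h
  obtain ⟨K, hK⟩ := h ∅ mem_bot
  have hlarge : ∀ᶠ j in atTop, K < c * n j :=
    (tendsto_natCast_atTop_atTop.comp hn).const_mul_atTop hc |>.eventually_gt_atTop K
  obtain ⟨j, hj, hj'⟩ := (hK.and_eventually hlarge).exists
  simp only [visitCount_empty, Nat.cast_zero] at hj
  linarith

/-- The `m` disjoint sets share the `n j` available times, while each of them receives, up to a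
bounded shift, all the visits to one member of `l`. -/
lemma Heavy.mul_le_one (hn : Tendsto n atTop atTop) (h : Heavy f p n c l) {m : ℕ}
    {U : ℕ → Set α} (hU : (Finset.range m : Set ℕ).PairwiseDisjoint U)
    (hl : ∀ s < m, ∀ᶠ z in l, f^[s] z ∈ U s) : m * c ≤ 1 := by
  by_contra! hmc
  set V := {z | ∀ s ∈ Finset.range m, f^[s] z ∈ U s}
  have hV : V ∈ l := (Finset.eventually_all _).2 fun s hs => hl s (Finset.mem_range.1 hs)
  obtain ⟨K, hK⟩ := h V hV
  have hlarge : ∀ᶠ j in atTop, m * (K + m) < (m * c - 1) * n j :=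
    (tendsto_natCast_atTop_atTop.comp hn).const_mul_atTop (sub_pos.2 hmc)
      |>.eventually_gt_atTop _
  obtain ⟨j, hj, hj'⟩ := (hK.and_eventually hlarge).exists
  have hshift : ∀ s ∈ Finset.range m, c * n j - K - m ≤ visitCount f p (n j) (U s) := by
    intro s hs
    have hVs : (visitCount f p (n j) V : ℝ) ≤ visitCount f p (n j) (U s) + s := by
      exact_mod_cast visitCount_le_add_of_mapsTo (s := V) (fun z hz => hz s hs) _
    have hsm : (s : ℝ) ≤ m := by exact_mod_cast (Finset.mem_range.1 hs).le
    linarith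
  have hsum : (m : ℝ) * (c * n j - K - m) ≤ n j := by
    have hle := Finset.card_nsmul_le_sum _ _ _ hshift
    simp only [Finset.card_range, nsmul_eq_mul] at hle
    exact hle.trans (by exact_mod_cast sum_visitCount_le _ hU _)
  nlinarith

end Heavy

section Topology

variable {X : Type*} [TopologicalSpace X] {f : X → X} {p : X} {n : ℕ → ℕ} {c : ℝ}

lemma continuousAt_iterate_of_forall {x : X} {m : ℕ}
    (h : ∀ k < m, ContinuousAt f (f^[k] x)) : ContinuousAt f^[m] x := by
  induction m with
  | zero => exact continuousAt_id
  | succ m ih =>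
    rw [Function.iterate_succ']
    exact (h m m.lt_succ_self).comp (ih fun k hk => h k (hk.trans m.lt_succ_self))

lemma not_heavy_nhds_of_injective_iterate [T2Space X] (hn : Tendsto n atTop atTop) (hc : 0 < c)
    {q : X} (hinj : Function.Injective (f^[·] q)) (hcont : ∀ k, ContinuousAt f (f^[k] q)) :
    ¬ Heavy f p n c (𝓝 q) := by
  intro h
  set m := ⌈c⁻¹⌉₊ + 1
  have hdisj : (Finset.range m : Set ℕ).PairwiseDisjoint (fun s => 𝓝 (f^[s] q)) :=
    fun s _ t _ hst => disjoint_nhds_nhds.2 (hinj.ne hst)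
  obtain ⟨U, hU, hUdisj⟩ := hdisj.exists_mem_filter (Finset.range m).finite_toSet
  have hmc := h.mul_le_one hn hUdisj fun s _ =>
    (continuousAt_iterate_of_forall fun k _ => hcont k).preimage_mem_nhds (hU s)
  have hm : 1 < m * c := (inv_lt_iff_one_lt_mul₀ hc).1 ((Nat.le_ceil _).trans_lt (by simp [m]))
  linarith

end Topology

lemma birkhoffMeasure_apply (f : ℝ → ℝ) (p : ℝ) (N : ℕ) (s : Set ℝ) :
    birkhoffMeasure f p N s = visitCount f p N s / N := by
  classical
  simp only [birkhoffMeasure, Measure.smul_apply, Measure.finsetSum_apply, Measure.dirac_apply,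
    indicator_apply, Pi.one_apply, Finset.sum_boole, smul_eq_mul, ENNReal.div_eq_inv_mul,
    visitCount]

lemma heavy_of_frequently_le_birkhoffMeasure {f : ℝ → ℝ} {p : ℝ} {n : ℕ → ℕ} {c : ℝ}
    {l : Filter ℝ}
    (h : ∀ U ∈ l, ∃ᶠ j in atTop, ENNReal.ofReal c ≤ birkhoffMeasure f p (n j) U) :
    Heavy f p n c l := by
  refine fun U hU => ⟨0, (h U hU).mono fun j hj => ?_⟩
  rw [birkhoffMeasure_apply] at hj
  rw [sub_zero]
  rcases Nat.eq_zero_or_pos (n j) with hnj | hnj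
  · simp [hnj]
  rw [ENNReal.le_div_iff_mul_le (by simp [hnj.ne']) (by simp), ← ENNReal.ofReal_natCast,
    ← ENNReal.ofReal_mul' (Nat.cast_nonneg _), ← ENNReal.ofReal_natCast] at hj
  exact (ENNReal.ofReal_le_ofReal_iff (Nat.cast_nonneg _)).1 hj

lemma NoPeriodicPts.injective_iterate {f : ℝ → ℝ} (hnp : NoPeriodicPts f)
    (hf : MapsTo f (Icc 0 1) (Icc 0 1)) {q : ℝ} (hq : q ∈ Icc 0 1) :
    Function.Injective (f^[·] q) := by
  refine .of_lt_imp_ne fun s t hst heq => hnp _ (hf.iterate s hq) (t - s) (by omega) ?_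
  rw [← Function.iterate_add_apply, Nat.sub_add_cancel hst.le, heq]

namespace PiecewiseContData

variable {f : ℝ → ℝ} (P : PiecewiseContData f) {p : ℝ} {n : ℕ → ℕ} {c : ℝ}

lemma pt_castSucc_lt_pt_succ (i : Fin (P.d + 1)) : P.pt i.castSucc < P.pt i.succ :=
  P.mono i.castSucc_lt_succ

lemma Ioo_subset_Icc (i : Fin (P.d + 1)) :
    Ioo (P.pt i.castSucc) (P.pt i.succ) ⊆ Icc 0 1 := by
  rw [← P.first, ← P.last]
  exact Ioo_subset_Icc_self.trans
    (Icc_subset_Icc (P.mono.monotone (Fin.zero_le _)) (P.mono.monotone (Fin.le_last _)))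

lemma exists_mem_Ioo {q : ℝ} (hq : q ∈ Icc 0 1) (hD : q ∉ P.D) :
    ∃ i : Fin (P.d + 1), q ∈ Ioo (P.pt i.castSucc) (P.pt i.succ) := by
  have hq' : q ∈ Ioc (P.pt 0) (P.pt (Fin.last _)) := by
    rw [P.first, P.last]
    exact ⟨hq.1.lt_of_ne fun h => hD ⟨0, P.first.trans h⟩, hq.2⟩
  rw [← P.mono.monotone.biUnion_Ico_Ioc_map_succ, mem_iUnion₂] at hq'
  obtain ⟨i, hi, hqi⟩ := hq'
  obtain ⟨i, rfl⟩ := Fin.eq_castSucc_of_ne_last hi.2.ne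
  rw [Fin.orderSucc_castSucc] at hqi
  exact ⟨i, hqi.1, hqi.2.lt_of_ne fun h => hD ⟨_, h.symm⟩⟩

lemma continuousAt_of_notMem_D {q : ℝ} (hq : q ∈ Icc 0 1) (hD : q ∉ P.D) :
    ContinuousAt f q := by
  obtain ⟨i, hi⟩ := P.exists_mem_Ioo hq hD
  exact (P.cont i).continuousAt (Ioo_mem_nhds hi.1 hi.2)

lemma tendsto_nhdsGT (i : Fin (P.d + 1)) :
    Tendsto f (𝓝[>] (P.pt i.castSucc)) (𝓝 (P.wR i)) := by
  simpa only [nhdsWithin_Ioo_eq_nhdsGT (P.pt_castSucc_lt_pt_succ i)] using P.wR_lim i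

lemma tendsto_nhdsLT (i : Fin (P.d + 1)) :
    Tendsto f (𝓝[<] (P.pt i.succ)) (𝓝 (P.wL i)) := by
  simpa only [nhdsWithin_Ioo_eq_nhdsLT (P.pt_castSucc_lt_pt_succ i)] using P.wL_lim i

lemma W_subset_Icc (hf : MapsTo f (Icc 0 1) (Icc 0 1)) : P.W ⊆ Icc 0 1 := by
  rintro w (⟨i, rfl⟩ | ⟨i, rfl⟩)
  · refine isClosed_Icc.mem_of_tendsto (P.tendsto_nhdsGT i) ?_
    filter_upwards [Ioo_mem_nhdsGT (P.pt_castSucc_lt_pt_succ i)] with z hz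
    exact hf (P.Ioo_subset_Icc i hz)
  · refine isClosed_Icc.mem_of_tendsto (P.tendsto_nhdsLT i) ?_
    filter_upwards [Ioo_mem_nhdsLT (P.pt_castSucc_lt_pt_succ i)] with z hz
    exact hf (P.Ioo_subset_Icc i hz)

lemma not_heavy_of_orbit_notMem_D (hf : MapsTo f (Icc 0 1) (Icc 0 1)) (hnp : NoPeriodicPts f)
    (hn : Tendsto n atTop atTop) (hc : 0 < c) {q : ℝ} (hq : q ∈ Icc 0 1)
    (horb : ∀ k, f^[k] q ∉ P.D) : ¬ Heavy f p n c (𝓝 q) :=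
  not_heavy_nhds_of_injective_iterate hn hc (hnp.injective_iterate hf hq)
    fun k => P.continuousAt_of_notMem_D (hf.iterate k hq) (horb k)

lemma exists_heavy_of_heavy_nhdsGT (hp : ∀ k, f^[k] p ∈ Icc 0 1) (hn : Tendsto n atTop atTop)
    (hc : 0 < c) (i : Fin (P.d + 2)) (h : Heavy f p n c (𝓝[>] (P.pt i))) :
    ∃ w ∈ P.W, Heavy f p n c (𝓝 w) := by
  cases i using Fin.lastCases with
  | last =>
    refine absurd ?_ (Heavy.not_bot (f := f) (p := p) hn hc)
    rw [← inf_principal_eq_bot.2 ?_]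
    · exact h.inf_principal hp
    filter_upwards [self_mem_nhdsWithin] with z hz hz'
    exact hz'.2.not_gt (P.last ▸ hz)
  | cast j => exact ⟨P.wR j, Or.inl ⟨j, rfl⟩, h.map (P.tendsto_nhdsGT j)⟩

lemma exists_heavy_of_heavy_nhdsLT (hp : ∀ k, f^[k] p ∈ Icc 0 1) (hn : Tendsto n atTop atTop)
    (hc : 0 < c) (i : Fin (P.d + 2)) (h : Heavy f p n c (𝓝[<] (P.pt i))) :
    ∃ w ∈ P.W, Heavy f p n c (𝓝 w) := by
  cases i using Fin.cases with
  | zero =>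
    refine absurd ?_ (Heavy.not_bot (f := f) (p := p) hn hc)
    rw [← inf_principal_eq_bot.2 ?_]
    · exact h.inf_principal hp
    filter_upwards [self_mem_nhdsWithin] with z hz hz'
    exact hz'.1.not_gt (P.first ▸ hz)
  | succ j => exact ⟨P.wL j, Or.inr ⟨j, rfl⟩, h.map (P.tendsto_nhdsLT j)⟩

lemma exists_heavy_of_heavy_nhds_pt (hp : ∀ k, f^[k] p ∈ Icc 0 1) (hn : Tendsto n atTop atTop)
    (hc : 0 < c) {i : Fin (P.d + 2)} (hpi : ∀ k, f^[k] p ≠ P.pt i)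
    (h : Heavy f p n c (𝓝 (P.pt i))) : ∃ w ∈ P.W, Heavy f p n (c / 2) (𝓝 w) := by
  have h' : Heavy f p n c (𝓝[<] (P.pt i) ⊔ 𝓝[>] (P.pt i)) := by
    rw [nhdsLT_sup_nhdsGT]
    exact h.inf_principal hpi
  rcases h'.half_of_sup with hlt | hgt
  · exact P.exists_heavy_of_heavy_nhdsLT hp hn (half_pos hc) i hlt
  · exact P.exists_heavy_of_heavy_nhdsGT hp hn (half_pos hc) i hgt

lemma exists_heavy_of_orbit_mem_D (hf : MapsTo f (Icc 0 1) (Icc 0 1)) (hp : p ∈ Icc 0 1)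
    (hpD : ∀ k, f^[k] p ∉ P.D) (hn : Tendsto n atTop atTop) (hc : 0 < c) {x : ℝ}
    (hx : x ∈ Icc 0 1) (hxD : ∃ k, f^[k] x ∈ P.D) (h : Heavy f p n c (𝓝 x)) :
    ∃ w ∈ P.W, Heavy f p n (c / 2) (𝓝 w) := by
  classical
  obtain ⟨i, hi⟩ := Nat.find_spec hxD
  have hhit : Heavy f p n c (𝓝 (f^[Nat.find hxD] x)) :=
    h.map_iterate (continuousAt_iterate_of_forall fun k hk =>
      P.continuousAt_of_notMem_D (hf.iterate k hx) (Nat.find_min hxD hk))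
  rw [← hi] at hhit
  exact P.exists_heavy_of_heavy_nhds_pt (fun k => hf.iterate k hp) hn hc
    (fun k hk => hpD k ⟨i, hk.symm⟩) hhit

end PiecewiseContData

theorem stmt3_general (f : ℝ → ℝ) (hf : MapsTo f (Icc (0:ℝ) 1) (Icc (0:ℝ) 1))
    (P : PiecewiseContData f) (hnc : P.NoConnections) (hnp : NoPeriodicPts f)
    (p : ℝ) (hp : p ∈ Icc (0:ℝ) 1) (hporb : ∀ k : ℕ, f^[k] p ∉ P.D)
    (n : ℕ → ℕ) (hn : StrictMono n)
    (x : ℝ) (hx : x ∈ Icc (0:ℝ) 1) (ε : ℝ) (hε : 0 < ε) :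
    ∃ a b : ℝ, a < x ∧ x < b ∧ ∃ j₀ : ℕ, ∀ j ≥ j₀,
      birkhoffMeasure f p (n j) (Ioo a b ∩ Icc (0:ℝ) 1) < ENNReal.ofReal ε := by
  by_contra! hcon
  have hheavy : Heavy f p n ε (𝓝 x) := heavy_of_frequently_le_birkhoffMeasure fun U hU => by
    obtain ⟨a, b, ⟨hax, hxb⟩, hab⟩ := mem_nhds_iff_exists_Ioo_subset.1 hU
    refine frequently_atTop.2 fun j₀ => ?_
    obtain ⟨j, hj, hle⟩ := hcon a b hax hxb j₀
    exact ⟨j, hj, hle.trans (measure_mono (inter_subset_left.trans hab))⟩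
  have hn' := hn.tendsto_atTop
  by_cases hxD : ∃ k, f^[k] x ∈ P.D
  · obtain ⟨w, hwW, hw⟩ := P.exists_heavy_of_orbit_mem_D hf hp hporb hn' hε hx hxD hheavy
    exact P.not_heavy_of_orbit_notMem_D hf hnp hn' (half_pos hε) (P.W_subset_Icc hf hwW)
      (hnc.2 w hwW) hw
  · exact P.not_heavy_of_orbit_notMem_D hf hnp hn' hε hx (not_exists.1 hxD) hheavy

/-- with `p` a point whose forward orbit avoids the partition set `D`,
and `μ` a weak* limit of a subsequence of the Birkhoff averages `μ_n`, every point
`x ∈ [0,1]` has a relatively open subinterval neighborhood whose `μ_{n_j}`-measure is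
eventually `< ε`. -/
theorem stmt3 (f : ℝ → ℝ) (hf : MapsTo f (Icc (0:ℝ) 1) (Icc (0:ℝ) 1))
    (P : PiecewiseContData f) (hnc : P.NoConnections) (hnp : NoPeriodicPts f)
    (p : ℝ) (hp : p ∈ Icc (0:ℝ) 1) (hporb : ∀ k : ℕ, f^[k] p ∉ P.D)
    (n : ℕ → ℕ) (hn : StrictMono n) (μ : Measure ℝ) (hμ : IsProbabilityMeasure μ)
    (hconv : ∀ φ : ℝ → ℝ, Continuous φ →
      Tendsto (fun j => ∫ x, φ x ∂(birkhoffMeasure f p (n j))) atTop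
        (𝓝 (∫ x, φ x ∂μ)))
    (x : ℝ) (hx : x ∈ Icc (0:ℝ) 1) (ε : ℝ) (hε : 0 < ε) :
    ∃ a b : ℝ, a < x ∧ x < b ∧ ∃ j₀ : ℕ, ∀ j ≥ j₀,
      birkhoffMeasure f p (n j) (Ioo a b ∩ Icc (0:ℝ) 1) < ENNReal.ofReal ε :=
  stmt3_general f hf P hnc hnp p hp hporb n hn x hx ε hε
end

section
/- Let f : [0,1] → [0,1] be a piecewise continuous interval map with no connections and no periodic points, let p ∈ [0,1] be such that the forward orbit {f^k(p) : k ≥ 0} avoids the partition set D, let μ_n = (1/n) Σ_{k=0}^{n-1} δ_{f^k(p)}, and suppose μ_{n_j} → μ weak*. Then any such weak* limit μ is non-atomic: μ({x}) = 0 for every x ∈ [0,1]. -/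
open Set Filter MeasureTheory Topology
open scoped ENNReal

/-!
If `μ {x} = ε > 0`, then for every `δ > 0` the orbit of `p` spends a fraction at least `ε / 2`
of the times `k < N` in the `δ`-ball around `x`, for infinitely many `N`; by pigeonhole two of
these visits are at most `M = ⌈4 / ε⌉` steps apart. Only finitely many gaps `m ≤ M` are possible,
so one of them works for every `δ`: orbit points `y_i → x` with `f^[m] y_i → x`.
If the orbit of `x` misses `D` before time `m`, then `f^[m]` is continuous at `x` and `x` is
periodic. Otherwise let `j` be the first time with `f^[j] x ∈ D`. The points `f^[j] y_i` avoid `D`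
and approach this partition point from one side, so `f^[j+1] y_i` tends to a one-sided limit
value `w ∈ W`, whose orbit avoids `D`; by continuity `x = f^[m-j-1] w`, and then
`f^[m-1] w = f^[j] x ∈ D` is a connection.
-/

lemma Finset.exists_lt_lt_add_of_add_lt_card_mul {S : Finset ℕ} {N M : ℕ}
    (hS : S ⊆ Finset.range N) (hcard : N + M < S.card * M) :
    ∃ a ∈ S, ∃ b ∈ S, a < b ∧ b < a + M := by
  have hM : 0 < M := Nat.pos_of_ne_zero fun h => by simp [h] at hcard
  have hblocks : (Finset.range (N / M + 1)).card < S.card := by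
    rw [Finset.card_range]
    refine Nat.lt_of_mul_lt_mul_right (a := M) ?_
    calc (N / M + 1) * M = N / M * M + M := by ring
      _ ≤ N + M := by gcongr; exact Nat.div_mul_le_self N M
      _ < S.card * M := hcard
  have hmaps : ∀ a ∈ S, a / M ∈ Finset.range (N / M + 1) := fun a ha =>
    Finset.mem_range.2 <| Nat.lt_succ_of_le <|
      Nat.div_le_div_right (Finset.mem_range.1 (hS ha)).le
  obtain ⟨a, ha, b, hb, hne, hab⟩ := Finset.exists_ne_map_eq_of_card_lt_of_maps_to hblocks hmaps
  have close : ∀ a b : ℕ, a / M = b / M → b < a + M := fun a b h =>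
    calc b < b / M * M + M := Nat.lt_div_mul_add hM
      _ = a / M * M + M := by rw [h]
      _ ≤ a + M := by gcongr; exact Nat.div_mul_le_self a M
  rcases hne.lt_or_gt with h | h
  · exact ⟨a, ha, b, hb, h, close a b hab⟩
  · exact ⟨b, hb, a, ha, h, close b a hab.symm⟩

lemma exists_mem_closure_range_pair_of_frequently_le_card {X : Type*} [PseudoMetricSpace X]
    {u : ℕ → X} {x : X} {c : ℝ} (hc : 0 < c)
    (h : ∀ δ > 0, ∃ᶠ N in atTop,
      c * N ≤ ((Finset.range N).filter fun k => dist (u k) x < δ).card) :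
    ∃ m ≥ 1, (x, x) ∈ closure (range fun k => (u k, u (k + m))) := by
  set M := ⌈2 / c⌉₊
  -- only finitely many gaps `m ≤ M` occur, so a single one serves every `δ`
  suffices hret : ∀ δ > 0, ∃ m ∈ Finset.Icc 1 M, ∃ k, dist (u k) x < δ ∧ dist (u (k + m)) x < δ by
    have hmem : (x, x) ∈ closure (⋃ m ∈ Finset.Icc 1 M, range fun k => (u k, u (k + m))) := by
      refine Metric.mem_closure_iff.2 fun δ hδ => ?_
      obtain ⟨m, hm, k, hk, hkm⟩ := hret δ hδ
      refine ⟨(u k, u (k + m)), mem_iUnion₂.2 ⟨m, hm, k, rfl⟩, ?_⟩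
      rw [Prod.dist_eq, dist_comm x, dist_comm x]
      exact max_lt hk hkm
    rw [Finset.closure_biUnion] at hmem
    obtain ⟨m, hm, hmem⟩ := mem_iUnion₂.1 hmem
    exact ⟨m, (Finset.mem_Icc.1 hm).1, hmem⟩
  intro δ hδ
  obtain ⟨N, hN, hMN⟩ := ((h δ hδ).and_eventually (eventually_gt_atTop M)).exists
  set S := (Finset.range N).filter fun k => dist (u k) x < δ
  have hcard : N + M < S.card * M := by
    have hcM : 2 ≤ c * M := by
      rw [← div_le_iff₀' hc]; exact Nat.le_ceil _
    have hMN' : (M : ℝ) < N := by exact_mod_cast hMN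
    have : (N + M : ℝ) < S.card * M := by nlinarith
    exact_mod_cast this
  obtain ⟨a, ha, b, hb, hab, hba⟩ :=
    Finset.exists_lt_lt_add_of_add_lt_card_mul (Finset.filter_subset _ _) hcard
  refine ⟨b - a, Finset.mem_Icc.2 ⟨by omega, by omega⟩, a, (Finset.mem_filter.1 ha).2, ?_⟩
  rw [Nat.add_sub_cancel' hab.le]
  exact (Finset.mem_filter.1 hb).2

lemma integral_birkhoffMeasure (f : ℝ → ℝ) (p : ℝ) (N : ℕ) (φ : ℝ → ℝ) :
    ∫ y, φ y ∂(birkhoffMeasure f p N) = (N : ℝ)⁻¹ * ∑ k ∈ Finset.range N, φ (f^[k] p) := by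
  rw [birkhoffMeasure, integral_smul_measure,
    integral_finsetSum_measure fun k _ => integrable_dirac enorm_lt_top]
  simp [ENNReal.toReal_inv, integral_dirac]

lemma frequently_le_card_visits {f : ℝ → ℝ} {p : ℝ} {n : ℕ → ℕ} (hn : Tendsto n atTop atTop)
    {μ : Measure ℝ} [IsFiniteMeasure μ]
    (hconv : ∀ φ : ℝ → ℝ, Continuous φ →
      Tendsto (fun j => ∫ x, φ x ∂(birkhoffMeasure f p (n j))) atTop (𝓝 (∫ x, φ x ∂μ)))
    {x : ℝ} (hx : 0 < μ.real {x}) {δ : ℝ} (hδ : 0 < δ) :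
    ∃ᶠ N in atTop,
      μ.real {x} / 2 * N ≤ ((Finset.range N).filter fun k => dist (f^[k] p) x < δ).card := by
  obtain ⟨φ, hφ_out, hφ_x, hφ_mem⟩ := exists_continuous_zero_one_of_isClosed
    Metric.isOpen_ball.isClosed_compl (isClosed_singleton (x := x))
    (disjoint_compl_left_iff_subset.2 (singleton_subset_iff.2 (Metric.mem_ball_self hδ)))
  have hφ_int : Integrable φ μ :=
    .of_bound φ.continuous.aestronglyMeasurable 1 (ae_of_all _ fun y => by
      rw [Real.norm_eq_abs, abs_le]; constructor <;> linarith [(hφ_mem y).1, (hφ_mem y).2])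
  have hμφ : μ.real {x} ≤ ∫ y, φ y ∂μ :=
    calc μ.real {x} = ∫ y in {x}, φ y ∂μ := by
          rw [integral_singleton, hφ_x rfl, Pi.one_apply, smul_eq_mul, mul_one]
      _ ≤ ∫ y, φ y ∂μ := setIntegral_le_integral hφ_int (ae_of_all _ fun y => (hφ_mem y).1)
  have hvisits : ∀ N : ℕ, ∑ k ∈ Finset.range N, φ (f^[k] p)
      ≤ ((Finset.range N).filter fun k => dist (f^[k] p) x < δ).card := by
    intro N
    rw [Finset.natCast_card_filter]
    refine Finset.sum_le_sum fun k _ => ?_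
    split_ifs with hk
    · exact (hφ_mem _).2
    · exact (hφ_out (show f^[k] p ∈ (Metric.ball x δ)ᶜ from hk)).le
  have hev : ∀ᶠ j in atTop, μ.real {x} / 2 < ∫ y, φ y ∂(birkhoffMeasure f p (n j)) :=
    (hconv φ φ.continuous).eventually (eventually_gt_nhds ((half_lt_self hx).trans_le hμφ))
  refine hn.frequently (hev.frequently.mono fun j hj => ?_)
  rw [integral_birkhoffMeasure] at hj
  rcases (n j).eq_zero_or_pos with h0 | hpos
  · simp [h0]
  · have hpos' : (0 : ℝ) < n j := by exact_mod_cast hpos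
    rw [lt_inv_mul_iff₀ hpos', mul_comm] at hj
    exact hj.le.trans (hvisits _)

namespace PiecewiseContData

variable {f : ℝ → ℝ} (P : PiecewiseContData f)

lemma exists_mem_Ioo_of_notMem_D {z : ℝ} (hz : z ∈ Icc (0 : ℝ) 1) (hzD : z ∉ P.D) :
    ∃ j : Fin (P.d + 1), z ∈ Ioo (P.pt j.castSucc) (P.pt j.succ) := by
  have hne : ∀ i, P.pt i ≠ z := fun i h => hzD ⟨i, h⟩
  obtain ⟨i, hzi, hmin⟩ := wellFounded_lt.has_min {i | z < P.pt i}
    ⟨Fin.last _, (P.last ▸ hz.2).lt_of_ne (hne _).symm⟩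
  have hi0 : i ≠ 0 := by
    rintro rfl
    exact absurd hzi (P.first ▸ hz.1).not_gt
  obtain ⟨j, rfl⟩ := Fin.exists_succ_eq.2 hi0
  exact ⟨j, (not_lt.1 fun h => hmin _ h Fin.castSucc_lt_succ).lt_of_ne (hne _), hzi⟩

lemma continuousAt_of_notMem_D_s4 {z : ℝ} (hz : z ∈ Icc (0 : ℝ) 1) (hzD : z ∉ P.D) :
    ContinuousAt f z :=
  let ⟨j, hj⟩ := P.exists_mem_Ioo_of_notMem_D hz hzD
  (P.cont j).continuousAt (Ioo_mem_nhds hj.1 hj.2)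

lemma continuousAt_iterate (hf : MapsTo f (Icc (0 : ℝ) 1) (Icc (0 : ℝ) 1)) {z : ℝ}
    (hz : z ∈ Icc (0 : ℝ) 1) {m : ℕ} (h : ∀ j < m, f^[j] z ∉ P.D) : ContinuousAt f^[m] z := by
  induction m with
  | zero => exact continuousAt_id
  | succ m ih =>
    rw [Function.iterate_succ']
    exact (P.continuousAt_of_notMem_D_s4 (hf.iterate m hz) (h m m.lt_succ_self)).comp
      (ih fun j hj => h j (hj.trans m.lt_succ_self))

variable {α : Type*} {l : Filter α} {u : α → ℝ}

lemma tendsto_wR (j : Fin (P.d + 1)) (hu : Tendsto u l (𝓝 (P.pt j.castSucc)))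
    (hgt : ∀ᶠ a in l, P.pt j.castSucc < u a) : Tendsto (f ∘ u) l (𝓝 (P.wR j)) :=
  (P.wR_lim j).comp <| tendsto_nhdsWithin_iff.2
    ⟨hu, hgt.and (hu.eventually_lt_const (P.mono Fin.castSucc_lt_succ))⟩

lemma tendsto_wL (j : Fin (P.d + 1)) (hu : Tendsto u l (𝓝 (P.pt j.succ)))
    (hlt : ∀ᶠ a in l, u a < P.pt j.succ) : Tendsto (f ∘ u) l (𝓝 (P.wL j)) :=
  (P.wL_lim j).comp <| tendsto_nhdsWithin_iff.2
    ⟨hu, (hu.eventually_const_lt (P.mono Fin.castSucc_lt_succ)).and hlt⟩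

lemma exists_tendsto_W [l.NeBot] {i : Fin (P.d + 2)} (hu : Tendsto u l (𝓝 (P.pt i)))
    (huI : ∀ a, u a ∈ Icc (0 : ℝ) 1) (hne : ∀ a, u a ≠ P.pt i) :
    ∃ w ∈ P.W, ∃ l' ≤ l, l'.NeBot ∧ Tendsto (f ∘ u) l' (𝓝 w) := by
  by_cases hright : ∃ᶠ a in l, P.pt i < u a
  · obtain ⟨a, ha⟩ := hright.exists
    have hi : i ≠ Fin.last _ := by
      rintro rfl
      exact (huI a).2.not_gt (P.last ▸ ha)
    obtain ⟨j, rfl⟩ := Fin.exists_castSucc_eq.2 hi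
    exact ⟨P.wR j, Or.inl ⟨j, rfl⟩, _, inf_le_left, frequently_iff_neBot.1 hright,
      P.tendsto_wR j (hu.mono_left inf_le_left)
        (eventually_inf_principal.2 (.of_forall fun _ => id))⟩
  · have hleft : ∀ᶠ a in l, u a < P.pt i :=
      (not_frequently.1 hright).mono fun a h => (not_lt.1 h).lt_of_ne (hne a)
    obtain ⟨a, ha⟩ := hleft.exists
    have hi : i ≠ 0 := by
      rintro rfl
      exact (huI a).1.not_gt (P.first ▸ ha)
    obtain ⟨j, rfl⟩ := Fin.exists_succ_eq.2 hi
    exact ⟨P.wL j, Or.inr ⟨j, rfl⟩, l, le_rfl, ‹_›, P.tendsto_wL j hu hleft⟩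

lemma eq_iterate_or_exists_W_of_tendsto_iterate (hf : MapsTo f (Icc (0 : ℝ) 1) (Icc (0 : ℝ) 1))
    (hnc : P.NoConnections) [l.NeBot] {y : α → ℝ} {x x' : ℝ} {m : ℕ}
    (hyI : ∀ a, y a ∈ Icc (0 : ℝ) 1) (hyD : ∀ a k, f^[k] (y a) ∉ P.D)
    (hx : Tendsto y l (𝓝 x)) (hx' : Tendsto (fun a => f^[m] (y a)) l (𝓝 x')) :
    x' = f^[m] x ∨ ∃ w ∈ P.W, ∃ j k, j + k + 1 = m ∧ f^[j] x ∈ P.D ∧ x' = f^[k] w := by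
  classical
  have hxI : x ∈ Icc (0 : ℝ) 1 := isClosed_Icc.mem_of_tendsto hx (.of_forall hyI)
  by_cases hD : ∃ j < m, f^[j] x ∈ P.D
  · right
    obtain ⟨hjm, i, hi⟩ := Nat.find_spec hD
    set j := Nat.find hD
    have hcont : ContinuousAt f^[j] x :=
      P.continuousAt_iterate hf hxI fun j' hj' hj'D => Nat.find_min hD hj' ⟨hj'.trans hjm, hj'D⟩
    have hu : Tendsto (fun a => f^[j] (y a)) l (𝓝 (P.pt i)) := hi ▸ hcont.tendsto.comp hx
    obtain ⟨w, hwW, l', hl', _, hw⟩ := P.exists_tendsto_W hu (fun a => hf.iterate j (hyI a))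
      fun a h => hyD a j ⟨i, h.symm⟩
    have hwI : w ∈ Icc (0 : ℝ) 1 :=
      isClosed_Icc.mem_of_tendsto hw (.of_forall fun a => hf (hf.iterate j (hyI a)))
    set k := m - (j + 1)
    have hk : ContinuousAt f^[k] w := P.continuousAt_iterate hf hwI fun i _ => hnc.2 w hwW i
    have hx'w : Tendsto (fun a => f^[m] (y a)) l' (𝓝 (f^[k] w)) := by
      refine (hk.tendsto.comp hw).congr fun a => ?_
      simp only [Function.comp_apply, ← Function.iterate_succ_apply' f j,
        ← Function.iterate_add_apply]
      congr 1
      omega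
    exact ⟨w, hwW, j, k, by omega, ⟨i, hi⟩, tendsto_nhds_unique (hx'.mono_left hl') hx'w⟩
  · exact .inl <| tendsto_nhds_unique hx'
      ((P.continuousAt_iterate hf hxI fun j hj hjD => hD ⟨j, hj, hjD⟩).tendsto.comp hx)

lemma not_tendsto_iterate_self (hf : MapsTo f (Icc (0 : ℝ) 1) (Icc (0 : ℝ) 1))
    (hnc : P.NoConnections) (hnp : NoPeriodicPts f) [l.NeBot] {y : α → ℝ} {x : ℝ} {m : ℕ}
    (hm : 1 ≤ m) (hyI : ∀ a, y a ∈ Icc (0 : ℝ) 1) (hyD : ∀ a k, f^[k] (y a) ∉ P.D)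
    (hx : Tendsto y l (𝓝 x)) : ¬ Tendsto (fun a => f^[m] (y a)) l (𝓝 x) := by
  intro hx'
  rcases P.eq_iterate_or_exists_W_of_tendsto_iterate hf hnc hyI hyD hx hx' with
    h | ⟨w, hwW, j, k, -, hjD, hxw⟩
  · exact hnp x (isClosed_Icc.mem_of_tendsto hx (.of_forall hyI)) m hm h.symm
  · rw [hxw, ← Function.iterate_add_apply] at hjD
    exact hnc.2 w hwW _ hjD

end PiecewiseContData

/-- any weak* limit `μ` of a subsequence of the Birkhoff averages along the
orbit of `p` (whose orbit avoids the partition set `D`) is non-atomic. -/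
theorem stmt4 (f : ℝ → ℝ) (hf : MapsTo f (Icc (0:ℝ) 1) (Icc (0:ℝ) 1))
    (P : PiecewiseContData f) (hnc : P.NoConnections) (hnp : NoPeriodicPts f)
    (p : ℝ) (hp : p ∈ Icc (0:ℝ) 1) (hporb : ∀ k : ℕ, f^[k] p ∉ P.D)
    (n : ℕ → ℕ) (hn : StrictMono n) (μ : Measure ℝ) (hμ : IsProbabilityMeasure μ)
    (hconv : ∀ φ : ℝ → ℝ, Continuous φ →
      Tendsto (fun j => ∫ x, φ x ∂(birkhoffMeasure f p (n j))) atTop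
        (𝓝 (∫ x, φ x ∂μ))) :
    ∀ x : ℝ, μ {x} = 0 := by
  intro x
  by_contra hx
  have hx_pos : 0 < μ.real {x} := ENNReal.toReal_pos hx (measure_ne_top μ _)
  obtain ⟨m, hm, hreturn⟩ := exists_mem_closure_range_pair_of_frequently_le_card (half_pos hx_pos)
    fun δ hδ => frequently_le_card_visits hn.tendsto_atTop hconv hx_pos hδ
  set g : ℕ → ℝ × ℝ := fun k => (f^[k] p, f^[k + m] p)
  have hl : (comap g (𝓝 (x, x))).NeBot := comap_neBot_iff.2 fun t ht => by
    obtain ⟨_, hgt, k, rfl⟩ := mem_closure_iff_nhds.1 hreturn t ht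
    exact ⟨k, hgt⟩
  have hg : Tendsto g (comap g (𝓝 (x, x))) (𝓝 (x, x)) := tendsto_comap
  refine P.not_tendsto_iterate_self hf hnc hnp hm (y := fun k => f^[k] p)
    (fun k => hf.iterate k hp) (fun k j => Function.iterate_add_apply f j k p ▸ hporb _)
    (continuous_fst.tendsto _ |>.comp hg)
    ((continuous_snd.tendsto _ |>.comp hg).congr fun k => ?_)
  simp only [g, Function.comp_apply, ← Function.iterate_add_apply, add_comm]
end

section
/- Let f : [0,1] → [0,1] be injective, continuous and monotone on an open interval I ⊆ [0,1], and let μ be a non-atomic f-invariant Borel probability measure. Define h : [0,1] → [0,1] by h(x) = μ([0,x]). Then for all x, y ∈ I with h(x) = h(y), one has h(f(x)) = h(f(y)); moreover |h(f(y)) − h(f(x))| = |h(y) − h(x)| for all x, y ∈ I. -/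
open Set MeasureTheory

/-- if `f : [0,1] → [0,1]` is injective and is continuous and monotone on
an open interval `I = (a,b) ⊆ [0,1]`, and `μ` is a non-atomic `f`-invariant Borel
probability measure on `[0,1]`, then the distribution function `h(x) = μ([0,x])`
satisfies: `h(x) = h(y) → h(f(x)) = h(f(y))` and `|h(f(y)) - h(f(x))| = |h(y) - h(x)|`
for all `x, y ∈ I`. -/
theorem stmt10 (f : ℝ → ℝ) (hf : MapsTo f (Icc (0:ℝ) 1) (Icc (0:ℝ) 1))
    (hinj : InjOn f (Icc (0:ℝ) 1)) (a b : ℝ) (hI : Ioo a b ⊆ Icc (0:ℝ) 1)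
    (hcont : ContinuousOn f (Ioo a b))
    (hmono : MonotoneOn f (Ioo a b) ∨ AntitoneOn f (Ioo a b))
    (μ : Measure ℝ) (hμ : IsProbabilityMeasure μ) (hsupp : μ (Icc (0:ℝ) 1) = 1)
    (hna : ∀ x : ℝ, μ {x} = 0)
    (hinv : ∀ B : Set ℝ, MeasurableSet B → μ (f ⁻¹' B) = μ B)
    (h : ℝ → ℝ) (hdef : ∀ x : ℝ, h x = (μ (Icc 0 x)).toReal) :
    ∀ x ∈ Ioo a b, ∀ y ∈ Ioo a b,
      (h x = h y → h (f x) = h (f y)) ∧ |h (f y) - h (f x)| = |h y - h x| := by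
  have hfin : ∀ s : Set ℝ, μ s ≠ ⊤ := fun s => measure_ne_top μ s
  have hcompl : μ (Icc (0:ℝ) 1)ᶜ = 0 := by
    have := measure_compl (measurableSet_Icc : MeasurableSet (Icc (0:ℝ) 1)) (hfin _)
    rw [this, hsupp, measure_univ, tsub_self]
  -- difference of distribution function equals measure of interval
  have hdiff : ∀ u v : ℝ, 0 ≤ u → u ≤ v → h v - h u = (μ (Icc u v)).toReal := by
    intro u v hu huv
    have hI0 : Icc (0:ℝ) v = Icc 0 u ∪ Ioc u v := (Set.Icc_union_Ioc_eq_Icc hu huv).symm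
    have hdisj : Disjoint (Icc (0:ℝ) u) (Ioc u v) := by
      apply Set.disjoint_left.mpr
      rintro z ⟨_, hz2⟩ ⟨hz3, _⟩
      exact absurd hz2 (not_le.mpr hz3)
    have hm : μ (Icc 0 v) = μ (Icc 0 u) + μ (Ioc u v) := by
      rw [hI0, measure_union hdisj measurableSet_Ioc]
    have hioc : μ (Ioc u v) = μ (Icc u v) := by
      refine le_antisymm (measure_mono Set.Ioc_subset_Icc_self) ?_
      have h1 : Icc u v = {u} ∪ Ioc u v := by
        rw [← Set.Ioc_insert_left huv, Set.insert_eq]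
      calc μ (Icc u v) ≤ μ {u} + μ (Ioc u v) := h1 ▸ measure_union_le _ _
        _ = μ (Ioc u v) := by rw [hna u, zero_add]
    rw [hdef, hdef, hm, ENNReal.toReal_add (hfin _) (hfin _), hioc]
    ring
  -- key measure identity
  have key : ∀ x ∈ Ioo a b, ∀ y ∈ Ioo a b, x ≤ y →
      μ (Icc (min (f x) (f y)) (max (f x) (f y))) = μ (Icc x y) := by
    intro x hx y hy hxy
    have hsub : Icc x y ⊆ Ioo a b := fun z hz =>
      ⟨lt_of_lt_of_le hx.1 hz.1, lt_of_le_of_lt hz.2 hy.2⟩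
    have hpre : f ⁻¹' (Icc (min (f x) (f y)) (max (f x) (f y))) ∩ Icc 0 1 = Icc x y := by
      apply Set.Subset.antisymm
      · rintro z ⟨hz1, hz2⟩
        have hivt : Icc (min (f x) (f y)) (max (f x) (f y)) ⊆ f '' Icc x y := by
          rcases le_total (f x) (f y) with hle | hle
          · rw [min_eq_left hle, max_eq_right hle]
            exact intermediate_value_Icc hxy (hcont.mono hsub)
          · rw [min_eq_right hle, max_eq_left hle]
            exact intermediate_value_Icc' hxy (hcont.mono hsub)
        obtain ⟨w, hw, hfw⟩ := hivt hz1
        have hwz : w = z := hinj (hI (hsub hw)) hz2 hfw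
        rw [← hwz]; exact hw
      · intro z hz
        refine ⟨?_, hI (hsub hz)⟩
        rcases hmono with hmon | hmon
        · have h1 := hmon (hsub (Set.left_mem_Icc.mpr hxy)) (hsub hz) hz.1
          have h2 := hmon (hsub hz) (hsub (Set.right_mem_Icc.mpr hxy)) hz.2
          exact ⟨le_trans (min_le_left _ _) h1, le_trans h2 (le_max_right _ _)⟩
        · have h1 := hmon (hsub (Set.left_mem_Icc.mpr hxy)) (hsub hz) hz.1
          have h2 := hmon (hsub hz) (hsub (Set.right_mem_Icc.mpr hxy)) hz.2
          exact ⟨le_trans (min_le_right _ _) h2, le_trans h1 (le_max_left _ _)⟩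
    calc μ (Icc (min (f x) (f y)) (max (f x) (f y)))
        = μ (f ⁻¹' (Icc (min (f x) (f y)) (max (f x) (f y)))) :=
          (hinv _ measurableSet_Icc).symm
      _ = μ (f ⁻¹' (Icc (min (f x) (f y)) (max (f x) (f y))) ∩ Icc 0 1) :=
          (measure_inter_conull hcompl).symm
      _ = μ (Icc x y) := by rw [hpre]
  -- main abs claim for x ≤ y
  have main : ∀ x ∈ Ioo a b, ∀ y ∈ Ioo a b, x ≤ y →
      |h (f y) - h (f x)| = |h y - h x| := by
    intro x hx y hy hxy
    have hx0 : (0:ℝ) ≤ x := (hI hx).1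
    have hfx0 : (0:ℝ) ≤ f x := (hf (hI hx)).1
    have hfy0 : (0:ℝ) ≤ f y := (hf (hI hy)).1
    have h1 : h y - h x = (μ (Icc x y)).toReal := hdiff x y hx0 hxy
    have hm0 : (0:ℝ) ≤ min (f x) (f y) := le_min hfx0 hfy0
    have h2 : h (max (f x) (f y)) - h (min (f x) (f y))
        = (μ (Icc (min (f x) (f y)) (max (f x) (f y)))).toReal :=
      hdiff _ _ hm0 min_le_max
    have h3 : |h (f y) - h (f x)| = h (max (f x) (f y)) - h (min (f x) (f y)) := by
      rcases le_total (f x) (f y) with hle | hle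
      · rw [min_eq_left hle, max_eq_right hle, abs_of_nonneg]
        rw [hdiff _ _ hfx0 hle]
        exact ENNReal.toReal_nonneg
      · rw [min_eq_right hle, max_eq_left hle, abs_sub_comm, abs_of_nonneg]
        rw [hdiff _ _ hfy0 hle]
        exact ENNReal.toReal_nonneg
    rw [h3, h2, key x hx y hy hxy, ← h1, abs_of_nonneg (by rw [h1]; exact ENNReal.toReal_nonneg)]
  intro x hx y hy
  have habs : |h (f y) - h (f x)| = |h y - h x| := by
    rcases le_total x y with hxy | hxy
    · exact main x hx y hy hxy
    · rw [abs_sub_comm, abs_sub_comm (h y)]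
      exact main y hy x hx hxy
  refine ⟨fun heq => ?_, habs⟩
  have h0 : |h (f y) - h (f x)| = 0 := by rw [habs, heq, sub_self, abs_zero]
  have := abs_eq_zero.mp h0
  linarith [sub_eq_zero.mp this]
end

section
/- Let f₂ : [0,1] → [0,1] be defined by f₂(x) = x/2 + 1/4 for 0 ≤ x < 1/2 and f₂(x) = x/2 for 1/2 ≤ x ≤ 1. Then f₂ has no periodic points and admits no invariant Borel probability measure: there is no Borel probability measure μ on [0,1] with μ(f₂⁻¹(B)) = μ(B) for all Borel sets B. -/
open Set MeasureTheory Filter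

/-- The map `f₂` of the final remarks: `f₂(x) = x/2 + 1/4` on `[0,1/2)` and
`f₂(x) = x/2` on `[1/2,1]`. -/
noncomputable def f₂ (x : ℝ) : ℝ := if x < 1/2 then x/2 + 1/4 else x/2

/-!
The height `φ = f₂Height`, `φ x = x` for `x < 1/2` and `φ x = -x` for `x ≥ 1/2`, strictly
increases along every orbit of `f₂`: on `[0,1/2)` the map pushes points up towards `1/2`, and a
point `x ≥ 1/2` is sent to `x/2`, whose height is at least `-x/2 > -x`. A strictly increasing
height rules out periodic points, and it also rules out invariant probability measures:
invariance forces `∫ φ ∘ f₂ dμ = ∫ φ dμ`, which is impossible when `φ < φ ∘ f₂` everywhere.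
-/

theorem MeasureTheory.MeasurePreserving.not_ae_lt_comp {α : Type*} [MeasurableSpace α]
    {μ : Measure α} [IsFiniteMeasure μ] [NeZero μ] {f : α → α} (hf : MeasurePreserving f μ μ)
    {φ : α → ℝ} (hφ : Integrable φ μ) : ¬ ∀ᵐ x ∂μ, φ x < φ (f x) := by
  intro hlt
  have hφf : Integrable (φ ∘ f) μ := hf.integrable_comp_of_integrable hφ
  have hint : ∫ x, φ x ∂μ = ∫ x, φ (f x) ∂μ := by
    rw [← integral_map hf.measurable.aemeasurable (hf.map_eq.symm ▸ hφ.aestronglyMeasurable),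
      hf.map_eq]
  have heq : φ =ᵐ[μ] φ ∘ f :=
    (integral_eq_iff_of_ae_le hφ hφf (hlt.mono fun _ h => h.le)).mp hint
  obtain ⟨x, hx_lt, hx_eq⟩ := (hlt.and heq).exists
  exact hx_lt.ne hx_eq

lemma mapsTo_f₂ : MapsTo f₂ (Icc (0:ℝ) 1) (Icc (0:ℝ) 1) := by
  rintro x ⟨h0, h1⟩
  simp only [f₂, mem_Icc]
  split_ifs <;> constructor <;> linarith

lemma measurable_f₂ : Measurable f₂ :=
  Measurable.ite measurableSet_Iio (by fun_prop) (by fun_prop)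

noncomputable def f₂Height (x : ℝ) : ℝ := if x < 1/2 then x else -x

lemma measurable_f₂Height : Measurable f₂Height :=
  Measurable.ite measurableSet_Iio measurable_id measurable_neg

lemma abs_f₂Height_le_one {x : ℝ} (hx : x ∈ Icc (0:ℝ) 1) : |f₂Height x| ≤ 1 := by
  obtain ⟨h0, h1⟩ := hx
  unfold f₂Height
  split_ifs <;> rw [abs_le] <;> constructor <;> linarith

lemma f₂Height_lt_f₂Height_f₂ (x : ℝ) : f₂Height x < f₂Height (f₂ x) := by
  unfold f₂Height f₂
  split_ifs <;> linarith

lemma strictMono_f₂Height_iterate (x : ℝ) : StrictMono fun n => f₂Height (f₂^[n] x) :=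
  strictMono_nat_of_lt_succ fun n => by
    simpa only [Function.iterate_succ_apply'] using f₂Height_lt_f₂Height_f₂ (f₂^[n] x)

lemma iterate_f₂_ne_self (x : ℝ) {k : ℕ} (hk : 1 ≤ k) : f₂^[k] x ≠ x := fun h =>
  (strictMono_f₂Height_iterate x hk).ne (by simp only [h, Function.iterate_zero_apply])

/-- `f₂` maps `[0,1]` to `[0,1]`, has no periodic points in `[0,1]`, and
admits no invariant Borel probability measure on `[0,1]`. -/
theorem stmt15 :
    MapsTo f₂ (Icc (0:ℝ) 1) (Icc (0:ℝ) 1) ∧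
    (∀ x ∈ Icc (0:ℝ) 1, ∀ k : ℕ, 1 ≤ k → f₂^[k] x ≠ x) ∧
    ¬ ∃ μ : Measure ℝ, IsProbabilityMeasure μ ∧ μ (Icc (0:ℝ) 1) = 1 ∧
        ∀ B : Set ℝ, MeasurableSet B → μ (f₂ ⁻¹' B) = μ B := by
  refine ⟨mapsTo_f₂, fun x _ k hk => iterate_f₂_ne_self x hk, ?_⟩
  rintro ⟨μ, hμ, hIcc, hinv⟩
  have hpres : MeasurePreserving f₂ μ μ :=
    ⟨measurable_f₂, Measure.ext fun B hB => by rw [Measure.map_apply measurable_f₂ hB, hinv B hB]⟩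
  have hae : ∀ᵐ x ∂μ, x ∈ Icc (0:ℝ) 1 :=
    (prob_compl_eq_zero_iff measurableSet_Icc).mpr hIcc
  have hint : Integrable f₂Height μ :=
    .of_bound measurable_f₂Height.aestronglyMeasurable 1
      (hae.mono fun _ hx => abs_f₂Height_le_one hx)
  exact hpres.not_ae_lt_comp hint (ae_of_all _ f₂Height_lt_f₂Height_f₂)
end
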